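/- Its derivative formula: for b, B ≥ 0 with b+B < 1 and θ ∈ (0, 1−b−B), the derivative of F(θ) = (1/2)[H_{b+B}(θ)+H_{b−B}(θ)+H_{−b+B}(θ)+H_{−b−B}(θ)] − H_b(θ) − H_{−b}(θ) equals (1/4)[log₂(((1+b+B+θ)(1+b−B+θ)(1+b−θ)²)/((1+b+B−θ)(1+b−B−θ)(1+b+θ)²)) + log₂(((1−b−B+θ)(1−b+B+θ)(1−b−θ)²)/((1−b−B−θ)(1−b+B−θ)(1−b+θ)²))], and this expression is nonnegative. -/

import Mathlib

noncomputable def Hent (ε x : ℝ) : ℝ :=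
  (1/2) * ((1 + ε + x) * Real.logb 2 (1 + ε + x) + (1 + ε - x) * Real.logb 2 (1 + ε - x))

lemma hent_deriv (ε x : ℝ) (h1 : 0 < 1 + ε + x) (h2 : 0 < 1 + ε - x) :
    HasDerivAt (fun y => Hent ε y)
      ((1/2) * ((Real.log (1 + ε + x) - Real.log (1 + ε - x)) / Real.log 2)) x := by
  have hu : HasDerivAt (fun y : ℝ => 1 + ε + y) 1 x := by
    simpa using (hasDerivAt_id x).const_add (1 + ε)
  have hv : HasDerivAt (fun y : ℝ => 1 + ε - y) (-1) x := by
    simpa using (hasDerivAt_id x).const_sub (1 + ε)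
  have hlu : HasDerivAt (fun y : ℝ => Real.log (1 + ε + y)) (1 / (1 + ε + x)) x :=
    hu.log h1.ne'
  have hlv : HasDerivAt (fun y : ℝ => Real.log (1 + ε - y)) ((-1) / (1 + ε - x)) x :=
    hv.log h2.ne'
  have h1' : HasDerivAt (fun y : ℝ => (1 + ε + y) * Real.log (1 + ε + y))
      (1 * Real.log (1 + ε + x) + (1 + ε + x) * (1 / (1 + ε + x))) x := hu.mul hlu
  have h2' : HasDerivAt (fun y : ℝ => (1 + ε - y) * Real.log (1 + ε - y))
      ((-1) * Real.log (1 + ε - x) + (1 + ε - x) * ((-1) / (1 + ε - x))) x := hv.mul hlv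
  have this := ((h1'.add h2').div_const (Real.log 2)).const_mul (1/2 : ℝ)
  have e1 : (1 + ε + x) * (1 / (1 + ε + x)) = 1 := by field_simp
  have e2 : (1 + ε - x) * ((-1) / (1 + ε - x)) = -1 := by field_simp
  rw [e1, e2] at this
  have heq : (1/2 : ℝ) * ((1 * Real.log (1 + ε + x) + 1 +
      ((-1) * Real.log (1 + ε - x) + (-1))) / Real.log 2)
      = (1/2) * ((Real.log (1 + ε + x) - Real.log (1 + ε - x)) / Real.log 2) := by ring_nf
  rw [heq] at this
  convert this using 2
  · rfl
  · rfl
  unfold Hent Real.logb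
  simp only [Pi.add_apply]
  ring

theorem F_deriv_case1 (b B : ℝ) (hb : 0 ≤ b) (hB : 0 ≤ B) (hbB : b + B < 1) :
    ∀ θ ∈ Set.Ioo (0 : ℝ) (1 - b - B),
      HasDerivAt (fun θ : ℝ =>
          (1/2) * (Hent (b + B) θ + Hent (b - B) θ + Hent (-b + B) θ + Hent (-b - B) θ)
            - Hent b θ - Hent (-b) θ)
        ((1/4) * (Real.logb 2 (((1 + b + B + θ) * (1 + b - B + θ) * (1 + b - θ)^2) /
            ((1 + b + B - θ) * (1 + b - B - θ) * (1 + b + θ)^2)) +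
          Real.logb 2 (((1 - b - B + θ) * (1 - b + B + θ) * (1 - b - θ)^2) /
            ((1 - b - B - θ) * (1 - b + B - θ) * (1 - b + θ)^2)))) θ ∧
      0 ≤ (1/4) * (Real.logb 2 (((1 + b + B + θ) * (1 + b - B + θ) * (1 + b - θ)^2) /
            ((1 + b + B - θ) * (1 + b - B - θ) * (1 + b + θ)^2)) +
          Real.logb 2 (((1 - b - B + θ) * (1 - b + B + θ) * (1 - b - θ)^2) /
            ((1 - b - B - θ) * (1 - b + B - θ) * (1 - b + θ)^2))) := by
  rintro θ ⟨hθ0, hθ1⟩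
  have p1 : (0:ℝ) < 1 + b + B + θ := by linarith
  have p2 : (0:ℝ) < 1 + b - B + θ := by linarith
  have p3 : (0:ℝ) < 1 + b - θ := by linarith
  have p4 : (0:ℝ) < 1 + b + B - θ := by linarith
  have p5 : (0:ℝ) < 1 + b - B - θ := by linarith
  have p6 : (0:ℝ) < 1 + b + θ := by linarith
  have q1 : (0:ℝ) < 1 - b - B + θ := by linarith
  have q2 : (0:ℝ) < 1 - b + B + θ := by linarith
  have q3 : (0:ℝ) < 1 - b - θ := by linarith
  have q4 : (0:ℝ) < 1 - b - B - θ := by linarith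
  have q5 : (0:ℝ) < 1 - b + B - θ := by linarith
  have q6 : (0:ℝ) < 1 - b + θ := by linarith
  constructor
  · have d1 := hent_deriv (b + B) θ (by linarith) (by linarith)
    have d2 := hent_deriv (b - B) θ (by linarith) (by linarith)
    have d3 := hent_deriv (-b + B) θ (by linarith) (by linarith)
    have d4 := hent_deriv (-b - B) θ (by linarith) (by linarith)
    have d5 := hent_deriv b θ (by linarith) (by linarith)
    have d6 := hent_deriv (-b) θ (by linarith) (by linarith)
    have D := ((((d1.add d2).add d3).add d4).const_mul (1/2 : ℝ)).sub d5 |>.sub d6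
    convert D using 1
    · rfl
    · rfl
    · rfl
    rw [Real.logb, Real.logb,
      Real.log_div (by positivity) (by positivity),
      Real.log_div (by positivity) (by positivity),
      Real.log_mul (by positivity) (by positivity),
      Real.log_mul (by positivity) (by positivity),
      Real.log_mul (by positivity) (by positivity),
      Real.log_mul (by positivity) (by positivity),
      Real.log_mul (by positivity) (by positivity),
      Real.log_mul (by positivity) (by positivity),
      Real.log_mul (by positivity) (by positivity),
      Real.log_mul (by positivity) (by positivity),
      Real.log_pow, Real.log_pow, Real.log_pow, Real.log_pow]
    push_cast
    ring
  · have key1 : (1 + b + B + θ) * (1 + b - B + θ) * (1 + b - θ)^2 -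
        (1 + b + B - θ) * (1 + b - B - θ) * (1 + b + θ)^2 = 4 * B^2 * (1 + b) * θ := by ring
    have key2 : (1 - b - B + θ) * (1 - b + B + θ) * (1 - b - θ)^2 -
        (1 - b - B - θ) * (1 - b + B - θ) * (1 - b + θ)^2 = 4 * B^2 * (1 - b) * θ := by ring
    have hb1 : (0:ℝ) < 1 - b := by linarith
    have r1 : (0:ℝ) ≤ 4 * B^2 * (1 + b) * θ := by positivity
    have r2 : (0:ℝ) ≤ 4 * B^2 * (1 - b) * θ := by positivity
    have h1 : (0:ℝ) ≤ Real.logb 2 (((1 + b + B + θ) * (1 + b - B + θ) * (1 + b - θ)^2) /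
        ((1 + b + B - θ) * (1 + b - B - θ) * (1 + b + θ)^2)) := by
      apply Real.logb_nonneg one_lt_two
      rw [le_div_iff₀ (by positivity)]
      linarith
    have h2 : (0:ℝ) ≤ Real.logb 2 (((1 - b - B + θ) * (1 - b + B + θ) * (1 - b - θ)^2) /
        ((1 - b - B - θ) * (1 - b + B - θ) * (1 - b + θ)^2)) := by
      apply Real.logb_nonneg one_lt_two
      rw [le_div_iff₀ (by positivity)]
      linarith
    linarith
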